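/- (Lemma 2.1.) Let C₁, C₂ > 0 and for σ > 0 define ρ_σ : ℤ³ → ℝ by ρ_σ(n) := C₁/(C₂ + |n|^{3+σ}). Then for all s, s' > 0 there exists a constant C > 0 such that for every n ∈ ℤ³, ∑_{k∈ℤ³} ρ_s(k) ρ_{s'}(n−k) ≤ C · ρ_{min{s,s'}}(n). -/

import Mathlib

open scoped BigOperators

noncomputable section

abbrev Z3 : Type := Fin 3 → ℤ

/-- `|n|²` for `n ∈ ℤ³` (square of the Euclidean norm). -/
def nsq (n : Z3) : ℝ := ∑ i, ((n i : ℝ)) ^ 2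

/-- The weight `ρ_σ(n) = C₁/(C₂ + |n|^{3+σ})`. -/
def rho (C₁ C₂ σ : ℝ) (n : Z3) : ℝ := C₁ / (C₂ + Real.sqrt (nsq n) ^ (3 + σ))

/-
Write `|n|` for the Euclidean norm and `p = 3 + m` with `m = min s s'`. On the lattice `|n| = 0`
or `|n| ≥ 1`, so `ρ_s, ρ_{s'} ≤ ρ_m`. For each `k` one of `|k|`, `|n - k|` is at least `|n| / 2`,
and `ρ_m` at that point is at most `2ᵖ ρ_m(n)`; hence
`ρ_m(k) ρ_m(n - k) ≤ 2ᵖ ρ_m(n) (ρ_m(k) + ρ_m(n - k))`. Summing over `k` gives the claim with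
`C = 2ᵖ⁺¹ ∑ ρ_m`, which is finite because `ρ_m(k) ≤ C₁ |k|⁻ᵖ` with `p > 3`, the exponent of
convergence of `p`-series over a lattice of rank 3.
-/

def Z3.toEuclideanSpace : Z3 →+ EuclideanSpace ℝ (Fin 3) where
  toFun n := WithLp.toLp 2 fun i ↦ (n i : ℝ)
  map_zero' := by ext; simp
  map_add' _ _ := by ext; simp

namespace Z3

lemma toEuclideanSpace_injective : Function.Injective toEuclideanSpace := fun m n h ↦
  funext fun i ↦ by simpa [toEuclideanSpace] using congrArg (· i) h

lemma one_le_norm_toEuclideanSpace {n : Z3} (hn : n ≠ 0) : 1 ≤ ‖toEuclideanSpace n‖ := by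
  obtain ⟨i, hi⟩ := Function.ne_iff.1 hn
  calc (1 : ℝ) ≤ |(n i : ℝ)| := by exact_mod_cast Int.one_le_abs hi
    _ = ‖toEuclideanSpace n i‖ := by simp [toEuclideanSpace]
    _ ≤ ‖toEuclideanSpace n‖ := PiLp.norm_apply_le _ i

lemma summable_norm_toEuclideanSpace_rpow {r : ℝ} (hr : r < -3) :
    Summable fun n : Z3 ↦ ‖toEuclideanSpace n‖ ^ r := by
  let L := Submodule.span ℤ (Set.range (EuclideanSpace.basisFun (Fin 3) ℝ).toBasis)
  have hmem (n : Z3) : toEuclideanSpace n ∈ L :=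
    (Module.Basis.mem_span_iff_repr_mem ℤ _ _).2 fun i ↦ ⟨n i, by simp [toEuclideanSpace]⟩
  have hrank : Module.finrank ℤ L = 3 := by rw [ZLattice.rank ℝ, finrank_euclideanSpace_fin]
  have hL := ZLattice.summable_norm_rpow L r (by rw [hrank]; exact_mod_cast hr)
  exact hL.comp_injective (i := fun n ↦ (⟨toEuclideanSpace n, hmem n⟩ : L))
    fun m n h ↦ toEuclideanSpace_injective (congrArg Subtype.val h)

end Z3

lemma tsum_mul_sub_le {G : Type*} [AddCommGroup G] {f g h : G → ℝ} {A : ℝ} (n : G)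
    (hf : Summable f) (hg : 0 ≤ g) (hgf : g ≤ f) (hh : 0 ≤ h) (hhf : h ≤ f)
    (hA : ∀ k, f k * f (n - k) ≤ A * f n * (f k + f (n - k))) :
    ∑' k, g k * h (n - k) ≤ 2 * A * (∑' k, f k) * f n := by
  have hf_sub : Summable fun k ↦ f (n - k) := (Equiv.subLeft n).summable_iff.2 hf
  have hbound (k : G) : g k * h (n - k) ≤ A * f n * (f k + f (n - k)) :=
    (mul_le_mul (hgf k) (hhf _) (hh _) ((hg k).trans (hgf k))).trans (hA k)
  have hsum : Summable fun k ↦ A * f n * (f k + f (n - k)) := (hf.add hf_sub).mul_left _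
  calc ∑' k, g k * h (n - k)
      ≤ ∑' k, A * f n * (f k + f (n - k)) :=
        (hsum.of_nonneg_of_le (fun k ↦ mul_nonneg (hg k) (hh _)) hbound).tsum_le_tsum hbound hsum
    _ = A * f n * (∑' k, f k + ∑' k, f k) := by
        rw [tsum_mul_left, hf.tsum_add hf_sub]
        congr 2
        exact (Equiv.subLeft n).tsum_eq f
    _ = 2 * A * (∑' k, f k) * f n := by ring

section rho

open Z3

variable {C₁ C₂ σ : ℝ}

lemma rho_eq (C₁ C₂ σ : ℝ) (n : Z3) :
    rho C₁ C₂ σ n = C₁ / (C₂ + ‖toEuclideanSpace n‖ ^ (3 + σ)) := by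
  simp [rho, nsq, EuclideanSpace.norm_eq, toEuclideanSpace]

lemma rho_nonneg (hC₁ : 0 ≤ C₁) (hC₂ : 0 ≤ C₂) (σ : ℝ) (n : Z3) : 0 ≤ rho C₁ C₂ σ n := by
  rw [rho_eq]; positivity

lemma rho_le_rho_of_exponent_le (hC₁ : 0 ≤ C₁) (hC₂ : 0 < C₂) {τ : ℝ} (hσ : -3 < σ) (hστ : σ ≤ τ)
    (n : Z3) : rho C₁ C₂ τ n ≤ rho C₁ C₂ σ n := by
  rw [rho_eq, rho_eq]
  rcases eq_or_ne n 0 with rfl | hn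
  · simp [Real.zero_rpow (by linarith : 3 + σ ≠ 0), Real.zero_rpow (by linarith : 3 + τ ≠ 0)]
  · gcongr
    exact one_le_norm_toEuclideanSpace hn

lemma rho_le_two_rpow_mul_rho (hC₁ : 0 ≤ C₁) (hC₂ : 0 < C₂) (hσ : -3 < σ) {n k : Z3}
    (h : ‖toEuclideanSpace n‖ ≤ 2 * ‖toEuclideanSpace k‖) :
    rho C₁ C₂ σ k ≤ 2 ^ (3 + σ) * rho C₁ C₂ σ n := by
  set p := 3 + σ
  have hp : 0 < p := by linarith
  have hpow : ‖toEuclideanSpace n‖ ^ p ≤ 2 ^ p * ‖toEuclideanSpace k‖ ^ p := by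
    rw [← Real.mul_rpow zero_le_two (norm_nonneg _)]; gcongr
  have hden : C₂ + ‖toEuclideanSpace n‖ ^ p ≤ 2 ^ p * (C₂ + ‖toEuclideanSpace k‖ ^ p) := by
    have := le_mul_of_one_le_left hC₂.le (Real.one_le_rpow one_le_two hp.le)
    linarith
  rw [rho_eq, rho_eq]
  calc C₁ / (C₂ + ‖toEuclideanSpace k‖ ^ p)
      = 2 ^ p * (C₁ / (2 ^ p * (C₂ + ‖toEuclideanSpace k‖ ^ p))) := by field_simp
    _ ≤ 2 ^ p * (C₁ / (C₂ + ‖toEuclideanSpace n‖ ^ p)) := by gcongr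

lemma rho_mul_rho_sub_le (hC₁ : 0 ≤ C₁) (hC₂ : 0 < C₂) (hσ : -3 < σ) (n k : Z3) :
    rho C₁ C₂ σ k * rho C₁ C₂ σ (n - k) ≤
      2 ^ (3 + σ) * rho C₁ C₂ σ n * (rho C₁ C₂ σ k + rho C₁ C₂ σ (n - k)) := by
  have hρ := rho_nonneg hC₁ hC₂.le σ
  have h2ρ : 0 ≤ 2 ^ (3 + σ) * rho C₁ C₂ σ n := mul_nonneg (by positivity) (hρ n)
  have htri :
      ‖toEuclideanSpace n‖ ≤ ‖toEuclideanSpace k‖ + ‖toEuclideanSpace (n - k)‖ := by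
    simpa using norm_add_le (toEuclideanSpace k) (toEuclideanSpace (n - k))
  rcases le_total ‖toEuclideanSpace k‖ ‖toEuclideanSpace (n - k)‖ with hle | hle
  · calc rho C₁ C₂ σ k * rho C₁ C₂ σ (n - k)
        ≤ rho C₁ C₂ σ k * (2 ^ (3 + σ) * rho C₁ C₂ σ n) := by
          gcongr; exacts [hρ k, rho_le_two_rpow_mul_rho hC₁ hC₂ hσ (by linarith)]
      _ = 2 ^ (3 + σ) * rho C₁ C₂ σ n * rho C₁ C₂ σ k := by ring
      _ ≤ _ := mul_le_mul_of_nonneg_left (le_add_of_nonneg_right (hρ _)) h2ρ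
  · calc rho C₁ C₂ σ k * rho C₁ C₂ σ (n - k)
        ≤ 2 ^ (3 + σ) * rho C₁ C₂ σ n * rho C₁ C₂ σ (n - k) := by
          gcongr; exacts [hρ _, rho_le_two_rpow_mul_rho hC₁ hC₂ hσ (by linarith)]
      _ ≤ _ := mul_le_mul_of_nonneg_left (le_add_of_nonneg_left (hρ _)) h2ρ

lemma summable_rho (hC₁ : 0 ≤ C₁) (hC₂ : 0 < C₂) (hσ : 0 < σ) : Summable (rho C₁ C₂ σ) := by
  refine .of_norm_bounded_eventually
    ((summable_norm_toEuclideanSpace_rpow (r := -(3 + σ)) (by linarith)).mul_left C₁) ?_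
  filter_upwards [Filter.eventually_cofinite_ne 0] with n hn
  have hpos : 0 < ‖toEuclideanSpace n‖ ^ (3 + σ) :=
    Real.rpow_pos_of_pos (one_pos.trans_le (one_le_norm_toEuclideanSpace hn)) _
  rw [Real.norm_of_nonneg (rho_nonneg hC₁ hC₂.le σ n), rho_eq, Real.rpow_neg (norm_nonneg _),
    ← div_eq_mul_inv]
  gcongr
  linarith

end rho

/-- **Lemma 2.1.** For `s, s' > 0` the convolution of the weights `ρ_s` and `ρ_{s'}`
is controlled by `ρ_{min(s,s')}`:
`∑_k ρ_s(k) ρ_{s'}(n-k) ≤ C ρ_{min(s,s')}(n)` for all `n ∈ ℤ³`. -/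
theorem rho_conv_rho (C₁ C₂ : ℝ) (hC₁ : 0 < C₁) (hC₂ : 0 < C₂)
    (s s' : ℝ) (hs : 0 < s) (hs' : 0 < s') :
    ∃ C > (0 : ℝ), ∀ n : Z3,
      (∑' k : Z3, rho C₁ C₂ s k * rho C₁ C₂ s' (n - k)) ≤ C * rho C₁ C₂ (min s s') n := by
  set m := min s s'
  have hm : 0 < m := lt_min hs hs'
  have hρ := rho_nonneg hC₁.le hC₂.le
  have hsum := summable_rho hC₁.le hC₂ hm
  have htsum : 0 < ∑' k, rho C₁ C₂ m k :=
    hsum.tsum_pos (hρ m) 0 (by rw [rho_eq]; positivity)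
  refine ⟨2 * 2 ^ (3 + m) * ∑' k, rho C₁ C₂ m k, by positivity, fun n ↦ ?_⟩
  exact tsum_mul_sub_le n hsum
    (hρ s) (rho_le_rho_of_exponent_le hC₁.le hC₂ (by linarith) (min_le_left _ _))
    (hρ s') (rho_le_rho_of_exponent_le hC₁.le hC₂ (by linarith) (min_le_right _ _))
    (rho_mul_rho_sub_le hC₁.le hC₂ (by linarith) n)
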